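/- arXiv:gr-qc/0410070 — 2 statements merged into one kernel-verified Lean document; each statement's English description precedes it below -/
import Mathlib

section
/- Let η be the Minkowski form on ℝ^N and let K be a skew-symmetric real N×N matrix, regarded as a bivector (antisymmetric covariant bilinear form). Then η⁻¹K is nilpotent (equivalently, all zeroth-order invariants tr((η⁻¹K)^k), k ≥ 1, vanish) if and only if K is of alignment type II, i.e. there exist vectors x, y ∈ ℝ^N with xᵀ η⁻¹ x = 0 and xᵀ η⁻¹ y = 0 such that K = x yᵀ − y xᵀ. -/
/-!
Put `G = η⁻¹`. Being congruent to `diag(1,…,1,−1)`, it has Witt index one: two orthogonal null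
covectors are parallel. The operator `T = K G` on covectors is `G`-antisymmetric. If such a `C`
satisfies `C² = 0`, its columns are pairwise orthogonal null covectors, so `C` has rank one, and
a rank-one antisymmetric form vanishes; hence `C = 0`. Applied to odd powers of `T`, this brings
a nilpotent `T` down to `T³ = 0`. Then `T² = u ⊗ c` with `u` null and `T u = 0`; choosing
`T² z = u` and `w = T z`, the covector `w` is not null and `K = u ∧ w / ⟨w, w⟩`, because the
difference of the two sides, times `G`, is again `G`-antisymmetric with zero square.
Conversely `(η⁻¹ (x ∧ y))³ = 0` by direct computation.
-/

open Matrix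

/-- The standard Minkowski diagonal matrix `diag(1,…,1,−1)` (N−1 positive squares,
one negative square). -/
def minkDiag (N : ℕ) : Matrix (Fin N) (Fin N) ℝ :=
  Matrix.diagonal (fun i => if (i : ℕ) + 1 < N then 1 else -1)

variable {n : Type*} [Fintype n]

/-- Witt index at most one: totally null subspaces are at most one-dimensional. -/
def WittIndexLeOne (G : Matrix n n ℝ) : Prop :=
  ∀ u w : n → ℝ, u ⬝ᵥ G *ᵥ u = 0 → w ⬝ᵥ G *ᵥ w = 0 → u ⬝ᵥ G *ᵥ w = 0 → u ≠ 0 →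
    ∃ t : ℝ, w = t • u

lemma dotProduct_mulVec_comm {G : Matrix n n ℝ} (hG : Gᵀ = G) (u w : n → ℝ) :
    u ⬝ᵥ G *ᵥ w = w ⬝ᵥ G *ᵥ u := by
  rw [← dotProduct_transpose_mulVec, hG]

lemma vecMulVec_eq_zero_of_transpose_eq_neg {ι : Type*} {a b : ι → ℝ}
    (h : (vecMulVec a b)ᵀ = -vecMulVec a b) : vecMulVec a b = 0 := by
  have hab : ∀ i j : ι, a j * b i = -(a i * b j) := fun i j => by
    simpa [vecMulVec_apply] using congrFun₂ h i j
  ext i j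
  have hii : a i * b i = 0 := by linarith [hab i i]
  have hsq : (a i * b j) ^ 2 = 0 := by
    linear_combination (a i * b j) * hab j i - (a j * b j) * hii
  simpa [vecMulVec_apply] using hsq

namespace WittIndexLeOne

lemma mul_mul_transpose [DecidableEq n] {G Q : Matrix n n ℝ} (hG : WittIndexLeOne G)
    (hQ : IsUnit Q) : WittIndexLeOne (Q * G * Qᵀ) := by
  have hinj := mulVec_injective_of_isUnit ((isUnit_transpose Q).mpr hQ)
  have hpair : ∀ a b : n → ℝ, a ⬝ᵥ (Q * G * Qᵀ) *ᵥ b = (Qᵀ *ᵥ a) ⬝ᵥ G *ᵥ (Qᵀ *ᵥ b) := by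
    intro a b
    rw [← mulVec_mulVec, ← mulVec_mulVec, dotProduct_mulVec a Q, ← mulVec_transpose]
  intro u w hu hw huw hu0
  rw [hpair] at hu hw huw
  obtain ⟨t, ht⟩ := hG _ _ hu hw huw fun h => hu0 (hinj (h.trans (mulVec_zero _).symm))
  exact ⟨t, hinj (by rw [ht, mulVec_smul])⟩

lemma exists_eq_vecMulVec {G C : Matrix n n ℝ} (hG : WittIndexLeOne G)
    (hC : Cᵀ * G * C = 0) : ∃ u c : n → ℝ, u ⬝ᵥ G *ᵥ u = 0 ∧ C = vecMulVec u c := by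
  have hcol : ∀ i j, Cᵀ i ⬝ᵥ G *ᵥ Cᵀ j = 0 := fun i j => by
    simpa [mul_mul_apply] using congrFun₂ hC i j
  by_cases h0 : C = 0
  · exact ⟨0, 0, by simp, by simp [h0]⟩
  obtain ⟨j, hj⟩ : ∃ j, Cᵀ j ≠ 0 := by
    by_contra! h
    exact h0 (transpose_eq_zero.mp (funext h))
  choose t ht using fun i => hG _ _ (hcol j j) (hcol i i) (hcol j i) hj
  refine ⟨Cᵀ j, t, hcol j j, ?_⟩
  ext k i
  simpa [vecMulVec_apply, mul_comm] using congrFun (ht i) k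

end WittIndexLeOne

lemma minkDiag_transpose (N : ℕ) : (minkDiag N)ᵀ = minkDiag N :=
  diagonal_transpose _

lemma minkDiag_mul_self (N : ℕ) : minkDiag N * minkDiag N = 1 := by
  rw [minkDiag, diagonal_mul_diagonal, ← diagonal_one]
  congr 1
  funext i
  split_ifs <;> norm_num

lemma dotProduct_minkDiag_mulVec {N : ℕ} (u w : Fin (N + 1) → ℝ) :
    u ⬝ᵥ minkDiag (N + 1) *ᵥ w =
      ∑ i : Fin N, u i.castSucc * w i.castSucc - u (Fin.last N) * w (Fin.last N) := by
  simp [minkDiag, mulVec_diagonal, dotProduct, Fin.sum_univ_castSucc, sub_eq_add_neg]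

lemma eq_zero_of_null_of_last_eq_zero {N : ℕ} {u : Fin (N + 1) → ℝ}
    (hu : u ⬝ᵥ minkDiag (N + 1) *ᵥ u = 0) (hlast : u (Fin.last N) = 0) : u = 0 := by
  rw [dotProduct_minkDiag_mulVec, hlast, mul_zero, sub_zero,
    Finset.sum_eq_zero_iff_of_nonneg fun i _ => mul_self_nonneg _] at hu
  funext i
  induction i using Fin.lastCases with
  | last => exact hlast
  | cast i => exact mul_self_eq_zero.mp (hu i (Finset.mem_univ i))

lemma wittIndexLeOne_minkDiag (N : ℕ) : WittIndexLeOne (minkDiag N) := by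
  intro u w hu hw huw hu0
  cases N with
  | zero => exact absurd (Subsingleton.elim u 0) hu0
  | succ N =>
    set l := Fin.last N
    have hul : u l ≠ 0 := fun h => hu0 (eq_zero_of_null_of_last_eq_zero hu h)
    have hz : w l • u - u l • w = 0 := by
      refine eq_zero_of_null_of_last_eq_zero ?_ (by simp [l]; ring)
      simp only [mulVec_sub, mulVec_smul, dotProduct_sub, sub_dotProduct, dotProduct_smul,
        smul_dotProduct, hu, hw, huw, dotProduct_mulVec_comm (minkDiag_transpose _) w u]
      simp
    refine ⟨w l / u l, ?_⟩
    rw [sub_eq_zero] at hz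
    rw [div_eq_inv_mul, mul_smul, hz, smul_smul, inv_mul_cancel₀ hul, one_smul]

lemma inv_eq_mul_mul_transpose [DecidableEq n] {η P D : Matrix n n ℝ} (hP : IsUnit P)
    (hD : D * D = 1) (h : Pᵀ * η * P = D) : η⁻¹ = P * D * Pᵀ := by
  refine inv_eq_right_inv (((isUnit_transpose P).mpr hP).mul_left_cancel ?_)
  calc Pᵀ * (η * (P * D * Pᵀ)) = Pᵀ * η * P * D * Pᵀ := by simp only [Matrix.mul_assoc]
    _ = Pᵀ * 1 := by rw [h, hD, Matrix.one_mul, Matrix.mul_one]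

def wedge (x y : n → ℝ) : Matrix n n ℝ := vecMulVec x y - vecMulVec y x

section Wedge

variable {G : Matrix n n ℝ}

lemma wedge_mul_mulVec (x y v : n → ℝ) :
    (wedge x y * G) *ᵥ v = (y ⬝ᵥ G *ᵥ v) • x - (x ⬝ᵥ G *ᵥ v) • y := by
  simp [wedge, ← mulVec_mulVec, sub_mulVec, vecMulVec_mulVec, dotProduct_mulVec]

lemma isSkewAdjoint_wedge_mul (hG : Gᵀ = G) (x y : n → ℝ) : G.IsSkewAdjoint (wedge x y * G) := by
  simp [Matrix.IsSkewAdjoint, Matrix.IsAdjointPair, wedge, transpose_mul, hG,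
    transpose_vecMulVec, mul_sub, sub_mul, Matrix.mul_assoc]

lemma pow_three_mul_wedge_eq_zero [DecidableEq n] (hG : Gᵀ = G) {x y : n → ℝ}
    (hxx : x ⬝ᵥ G *ᵥ x = 0) (hxy : x ⬝ᵥ G *ᵥ y = 0) : (G * wedge x y) ^ 3 = 0 := by
  have hyx : y ⬝ᵥ G *ᵥ x = 0 := by rw [dotProduct_mulVec_comm hG, hxy]
  rw [wedge, mul_sub, mul_vecMulVec, mul_vecMulVec, pow_succ, sq]
  simp [sub_mul, mul_sub, vecMulVec_mul_vecMulVec, hxx, hxy, hyx]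

end Wedge

lemma isNilpotent_mul_comm {R : Type*} [MonoidWithZero R] {a b : R} :
    IsNilpotent (a * b) ↔ IsNilpotent (b * a) := by
  suffices ∀ a b : R, IsNilpotent (a * b) → IsNilpotent (b * a) from ⟨this a b, this b a⟩
  rintro a b ⟨m, hm⟩
  have hsemi : SemiconjBy b (a * b) (b * a) := (mul_assoc b a b).symm
  refine ⟨m + 1, ?_⟩
  rw [pow_succ, ← mul_assoc, ← (hsemi.pow_right m).eq, hm, mul_zero, zero_mul]

section Antisymmetric

variable {G T : Matrix n n ℝ}

lemma Matrix.IsSkewAdjoint.transpose_mul (hT : G.IsSkewAdjoint T) : Tᵀ * G = -(G * T) := by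
  rw [← mul_neg]
  exact hT

lemma Matrix.IsSkewAdjoint.sub {S : Matrix n n ℝ} (hT : G.IsSkewAdjoint T)
    (hS : G.IsSkewAdjoint S) : G.IsSkewAdjoint (T - S) := by
  rw [Matrix.IsSkewAdjoint, Matrix.IsAdjointPair, transpose_sub, sub_mul, hT, hS, ← mul_sub,
    neg_sub']

lemma Matrix.IsSkewAdjoint.dotProduct_mulVec_mulVec (hT : G.IsSkewAdjoint T) (a b : n → ℝ) :
    a ⬝ᵥ G *ᵥ (T *ᵥ b) = -((T *ᵥ a) ⬝ᵥ G *ᵥ b) := by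
  rw [mulVec_mulVec, ← neg_neg (G * T), ← hT.transpose_mul, neg_mulVec, dotProduct_neg,
    ← mulVec_mulVec, dotProduct_mulVec, vecMul_transpose]

lemma Matrix.IsSkewAdjoint.mulVec_dotProduct_mulVec_self (hT : G.IsSkewAdjoint T) (hG : Gᵀ = G)
    (a : n → ℝ) : (T *ᵥ a) ⬝ᵥ G *ᵥ a = 0 := by
  have := hT.dotProduct_mulVec_mulVec a a
  rw [dotProduct_mulVec_comm hG] at this
  linarith

variable [DecidableEq n]

lemma Matrix.IsSkewAdjoint.transpose_pow_mul (hT : G.IsSkewAdjoint T) (k : ℕ) :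
    (T ^ k)ᵀ * G = G * (-T) ^ k := by
  rw [transpose_pow]
  exact (SemiconjBy.pow_right (Eq.symm hT) k).symm

lemma Matrix.IsSkewAdjoint.pow_of_odd (hT : G.IsSkewAdjoint T) {k : ℕ} (hk : Odd k) :
    G.IsSkewAdjoint (T ^ k) :=
  (hT.transpose_pow_mul k).trans (by rw [hk.neg_pow])

namespace WittIndexLeOne

lemma eq_zero_of_sq_eq_zero (hW : WittIndexLeOne G) (hG : Gᵀ = G) (hGu : IsUnit G)
    (hT : G.IsSkewAdjoint T) (h2 : T ^ 2 = 0) : T = 0 := by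
  obtain ⟨u, c, -, rfl⟩ := hW.exists_eq_vecMulVec (C := T)
    (by rw [hT.transpose_mul, neg_mul, mul_assoc, ← sq, h2, mul_zero, neg_zero])
  have hskew : (vecMulVec (G *ᵥ u) c)ᵀ = -vecMulVec (G *ᵥ u) c := by
    rw [← mul_vecMulVec, transpose_mul, hG, hT.transpose_mul]
  exact hGu.mul_left_cancel (by
    rw [mul_vecMulVec, vecMulVec_eq_zero_of_transpose_eq_neg hskew, mul_zero])

lemma pow_eq_zero_of_pow_two_mul_eq_zero (hW : WittIndexLeOne G) (hG : Gᵀ = G)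
    (hGu : IsUnit G) (hT : G.IsSkewAdjoint T) {k : ℕ} (hk : Odd k) (h : T ^ (2 * k) = 0) :
    T ^ k = 0 :=
  hW.eq_zero_of_sq_eq_zero hG hGu (hT.pow_of_odd hk) (by rw [← pow_mul, mul_comm, h])

lemma pow_succ_eq_zero_of_pow_two_mul_eq_zero (hW : WittIndexLeOne G) (hG : Gᵀ = G)
    (hGu : IsUnit G) (hT : G.IsSkewAdjoint T) {k : ℕ} (h : T ^ (2 * k) = 0) :
    T ^ (k + 1) = 0 := by
  rcases Nat.even_or_odd k with hk | hk
  · exact hW.pow_eq_zero_of_pow_two_mul_eq_zero hG hGu hT hk.add_one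
      (pow_eq_zero_of_le (by omega) h)
  · rw [pow_succ, hW.pow_eq_zero_of_pow_two_mul_eq_zero hG hGu hT hk h, zero_mul]

lemma pow_three_eq_zero_of_isNilpotent (hW : WittIndexLeOne G) (hG : Gᵀ = G) (hGu : IsUnit G)
    (hT : G.IsSkewAdjoint T) (h : IsNilpotent T) : T ^ 3 = 0 := by
  obtain ⟨m, hm⟩ := h
  induction m with
  | zero => exact pow_eq_zero_of_le (Nat.zero_le 3) hm
  | succ m ih =>
    by_cases hm3 : m + 1 ≤ 3
    · exact pow_eq_zero_of_le hm3 hm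
    · have := hW.pow_succ_eq_zero_of_pow_two_mul_eq_zero hG hGu hT (k := m - 1)
        (pow_eq_zero_of_le (by omega) hm)
      exact ih (by rwa [Nat.sub_add_cancel (by omega)] at this)

lemma exists_pow_two_eq_vecMulVec (hW : WittIndexLeOne G) (hT : G.IsSkewAdjoint T)
    (h3 : T ^ 3 = 0) :
    ∃ u c : n → ℝ, u ⬝ᵥ G *ᵥ u = 0 ∧ T *ᵥ u = 0 ∧ T ^ 2 = vecMulVec u c := by
  obtain ⟨u, c, hu, hT2⟩ := hW.exists_eq_vecMulVec (C := T ^ 2) (by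
    rw [hT.transpose_pow_mul, neg_sq, Matrix.mul_assoc, ← pow_add,
      pow_eq_zero_of_le (by norm_num) h3, Matrix.mul_zero])
  by_cases hc : c = 0
  · exact ⟨0, c, by simp, by simp, by simp [hT2, hc]⟩
  refine ⟨u, c, hu, ?_, hT2⟩
  have : vecMulVec (T *ᵥ u) c = 0 := by rw [← mul_vecMulVec, ← hT2, ← pow_succ', h3]
  simpa [hc] using this

lemma eq_wedge_mul (hW : WittIndexLeOne G) (hG : Gᵀ = G) (hGu : IsUnit G)
    (hT : G.IsSkewAdjoint T) {u y : n → ℝ} (hu : u ⬝ᵥ G *ᵥ u = 0) (huy : u ⬝ᵥ G *ᵥ y = 0)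
    (hTu : T *ᵥ u = 0) (hTy : T *ᵥ y = (y ⬝ᵥ G *ᵥ y) • u)
    (hT2 : ∀ v, T ^ 2 *ᵥ v = -((y ⬝ᵥ G *ᵥ y) * (u ⬝ᵥ G *ᵥ v)) • u) :
    T = wedge u y * G := by
  set S := T - wedge u y * G
  have hS : ∀ v, S *ᵥ v = T *ᵥ v - ((y ⬝ᵥ G *ᵥ v) • u - (u ⬝ᵥ G *ᵥ v) • y) := fun v => by
    rw [sub_mulVec, wedge_mul_mulVec]
  have hyu : y ⬝ᵥ G *ᵥ u = 0 := by rw [dotProduct_mulVec_comm hG, huy]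
  have hSu : S *ᵥ u = 0 := by simp [hS, hTu, hyu, hu]
  have hSy : S *ᵥ y = 0 := by simp [hS, hTy, huy]
  have hST : ∀ v, S *ᵥ (T *ᵥ v) = 0 := fun v => by
    rw [hS, mulVec_mulVec, ← sq, hT2, hT.dotProduct_mulVec_mulVec y v,
      hT.dotProduct_mulVec_mulVec u v, hTu, hTy]
    simp
  have hS2 : S ^ 2 = 0 := by
    refine ext_iff_mulVec.mpr fun v => ?_
    rw [sq, ← mulVec_mulVec, hS v, mulVec_sub, hST, mulVec_sub, mulVec_smul, mulVec_smul, hSu,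
      hSy]
    simp
  exact sub_eq_zero.mp
    (hW.eq_zero_of_sq_eq_zero hG hGu (hT.sub (isSkewAdjoint_wedge_mul hG u y)) hS2)

lemma exists_eq_wedge_mul_of_pow_three_eq_zero (hW : WittIndexLeOne G) (hG : Gᵀ = G)
    (hGu : IsUnit G) (hT : G.IsSkewAdjoint T) (h3 : T ^ 3 = 0) :
    ∃ x y : n → ℝ, x ⬝ᵥ G *ᵥ x = 0 ∧ x ⬝ᵥ G *ᵥ y = 0 ∧ T = wedge x y * G := by
  by_cases h2 : T ^ 2 = 0
  · exact ⟨0, 0, by simp, by simp, by simp [wedge, hW.eq_zero_of_sq_eq_zero hG hGu hT h2]⟩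
  have hskew := hT.dotProduct_mulVec_mulVec
  obtain ⟨u, c, hu, hTu, hT2⟩ := hW.exists_pow_two_eq_vecMulVec hT h3
  obtain ⟨hu0, hc0⟩ : u ≠ 0 ∧ c ≠ 0 := by simpa [hT2, not_or] using h2
  obtain ⟨z, hz⟩ : ∃ z, c ⬝ᵥ z = 1 :=
    ⟨(c ⬝ᵥ c)⁻¹ • c, by
      rw [dotProduct_smul, smul_eq_mul, inv_mul_cancel₀ (dotProduct_self_eq_zero.not.mpr hc0)]⟩
  have hT2v : ∀ v, T ^ 2 *ᵥ v = (c ⬝ᵥ v) • u := fun v => by simp [hT2, vecMulVec_mulVec]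
  set w := T *ᵥ z
  have hTw : T *ᵥ w = u := by rw [mulVec_mulVec, ← sq, hT2v, hz, one_smul]
  have huw : u ⬝ᵥ G *ᵥ w = 0 := hTw ▸ hT.mulVec_dotProduct_mulVec_self hG w
  set s := w ⬝ᵥ G *ᵥ w
  have hs : s ≠ 0 := fun hs => by
    obtain ⟨t, ht⟩ := hW u w hu hs huw hu0
    exact hu0 (by rw [← hTw, ht, mulVec_smul, hTu, smul_zero])
  have huz : u ⬝ᵥ G *ᵥ z = -s := by rw [← hTw]; linarith [hskew w z]
  -- `T²` is `G`-self-adjoint, so pairing `T² v = (c ⬝ᵥ v) • u` with `z` determines `c`.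
  have hc : ∀ v, c ⬝ᵥ v = -(s⁻¹ * (u ⬝ᵥ G *ᵥ v)) := fun v => by
    have hsym : (T ^ 2 *ᵥ v) ⬝ᵥ G *ᵥ z = v ⬝ᵥ G *ᵥ (T ^ 2 *ᵥ z) := by
      rw [sq, ← mulVec_mulVec, ← mulVec_mulVec, hskew, hskew, neg_neg]
    rw [hT2v, hT2v, hz, one_smul, smul_dotProduct, huz, smul_eq_mul, dotProduct_mulVec_comm hG]
      at hsym
    field_simp
    linarith
  have huy : u ⬝ᵥ G *ᵥ (s⁻¹ • w) = 0 := by rw [mulVec_smul, dotProduct_smul, huw, smul_zero]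
  have hyy : (s⁻¹ • w) ⬝ᵥ G *ᵥ (s⁻¹ • w) = s⁻¹ := by
    rw [mulVec_smul, dotProduct_smul, smul_dotProduct, smul_eq_mul, smul_eq_mul]
    change s⁻¹ * (s⁻¹ * s) = s⁻¹
    field_simp
  refine ⟨u, s⁻¹ • w, hu, huy, hW.eq_wedge_mul hG hGu hT hu huy hTu ?_ fun v => ?_⟩
  · rw [hyy, mulVec_smul, hTw]
  · rw [hyy, hT2v, hc]

lemma exists_eq_wedge_of_isNilpotent (hW : WittIndexLeOne G) (hG : Gᵀ = G) (hGu : IsUnit G)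
    {K : Matrix n n ℝ} (hK : Kᵀ = -K) (h : IsNilpotent (G * K)) :
    ∃ x y : n → ℝ, x ⬝ᵥ G *ᵥ x = 0 ∧ x ⬝ᵥ G *ᵥ y = 0 ∧ K = wedge x y := by
  have hT : G.IsSkewAdjoint (K * G) := by
    simp [Matrix.IsSkewAdjoint, Matrix.IsAdjointPair, transpose_mul, hG, hK, Matrix.mul_assoc]
  obtain ⟨x, y, hxx, hxy, hKG⟩ := hW.exists_eq_wedge_mul_of_pow_three_eq_zero hG hGu hT
    (hW.pow_three_eq_zero_of_isNilpotent hG hGu hT (isNilpotent_mul_comm.mp h))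
  exact ⟨x, y, hxx, hxy, hGu.mul_right_cancel hKG⟩

end WittIndexLeOne

end Antisymmetric

theorem bivector_vsi_iff_type_II_general (N : ℕ) (η K : Matrix (Fin N) (Fin N) ℝ)
    (hsig : ∃ P : Matrix (Fin N) (Fin N) ℝ, IsUnit P.det ∧ Pᵀ * η * P = minkDiag N)
    (hK : Kᵀ = -K) :
    IsNilpotent (η⁻¹ * K) ↔
      ∃ x y : Fin N → ℝ, x ⬝ᵥ η⁻¹ *ᵥ x = 0 ∧ x ⬝ᵥ η⁻¹ *ᵥ y = 0 ∧
        K = vecMulVec x y - vecMulVec y x := by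
  obtain ⟨P, hPdet, hP⟩ := hsig
  have hPu : IsUnit P := (isUnit_iff_isUnit_det P).mpr hPdet
  have hinv : η⁻¹ = P * minkDiag N * Pᵀ := inv_eq_mul_mul_transpose hPu (minkDiag_mul_self N) hP
  have hG : (η⁻¹)ᵀ = η⁻¹ := by
    rw [hinv, transpose_mul, transpose_mul, transpose_transpose, minkDiag_transpose,
      Matrix.mul_assoc]
  have hGu : IsUnit η⁻¹ := by
    rw [hinv]
    exact (hPu.mul (IsUnit.of_mul_eq_one _ (minkDiag_mul_self N))).mul
      ((isUnit_transpose P).mpr hPu)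
  have hW : WittIndexLeOne η⁻¹ := hinv ▸ (wittIndexLeOne_minkDiag N).mul_mul_transpose hPu
  constructor
  · exact hW.exists_eq_wedge_of_isNilpotent hG hGu hK
  · rintro ⟨x, y, hxx, hxy, rfl⟩
    exact ⟨3, pow_three_mul_wedge_eq_zero hG hxx hxy⟩

/-- **Proposition C.4** (`prop:vsibv`): a bivector `K` (skew-symmetric bilinear form)
on Minkowski space has vanishing zeroth-order scalar invariants — i.e. `η⁻¹K` is
nilpotent — if and only if it is of alignment type II, i.e. `K = x yᵀ − y xᵀ` with
`x` null and `y` orthogonal to `x` (with respect to the inverse metric `η⁻¹`). -/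
theorem bivector_vsi_iff_type_II (N : ℕ) (η K : Matrix (Fin N) (Fin N) ℝ)
    (hηsymm : η.IsSymm)
    (hsig : ∃ P : Matrix (Fin N) (Fin N) ℝ, IsUnit P.det ∧ Pᵀ * η * P = minkDiag N)
    (hK : Kᵀ = -K) :
    IsNilpotent (η⁻¹ * K) ↔
      ∃ x y : Fin N → ℝ, x ⬝ᵥ η⁻¹ *ᵥ x = 0 ∧ x ⬝ᵥ η⁻¹ *ᵥ y = 0 ∧
        K = vecMulVec x y - vecMulVec y x :=
  bivector_vsi_iff_type_II_general N η K hsig hK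
end

section
/- Let R be a curvature-like tensor on ℝ^N of negative boost order with respect to a null frame, i.e. all null-frame components of boost weight ≥ 0 vanish (the only possibly nonzero components are R_{011i}, R_{1ijk}, R_{1i1j}). If the bivector square vanishes, R^{(2)}_{abcd} = 0, and the Ricci contraction vanishes, Ric(R) = 0, then also R_{011i} = 0 and R_{1ijk} = 0 for all spatial i, j, k; that is, R is of principal type N and its only possibly nonvanishing null-frame components are R_{1i1j}. -/
/-! Write `V_i = R_{011i}` and `W_{ijk} = R_{1ijk}` for spatial indices. Since only components of
negative boost weight survive, `Ric_{1i} = 0` reads `V_i + W_{kik} = 0` and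
`R⁽²⁾_{1i1j} = 0` reads `⟨W_i, W_j⟩ = 2 V_i V_j`. A rank-one Gram matrix forces
`V_i W_j = V_j W_i`; contracting with `V` and using `W_{ijk} = -W_{ikj}` gives `V_a |V|² = 0`,
so `V = 0`, and then `|W_i|² = 0`. -/

open Matrix

/-! Null-frame formalism: we work with the components of tensors with respect to a
null frame `e_0 = ℓ, e_1 = n, e_2 = m_2, …, e_{N−1} = m_{N−1}` for the Minkowski
form `η` on `ℝ^N` (so `η(ℓ,n) = 1`, `η(m_i,m_j) = δ_{ij}`, all other frame products
vanish).  `ηnf N` is the matrix of frame components `η_{AB}`, and `ηup N = (ηnf N)⁻¹`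
is the matrix of the inverse-metric components `η^{AB}` used to raise indices.
Spatial indices are those `i : Fin N` with `2 ≤ i`. -/

/-- Frame components `η_{AB}` of the Minkowski form in a null frame. -/
def ηnf (N : ℕ) : Matrix (Fin N) (Fin N) ℝ :=
  Matrix.of fun A B =>
    if ((A : ℕ) = 0 ∧ (B : ℕ) = 1) ∨ ((A : ℕ) = 1 ∧ (B : ℕ) = 0) then 1
    else if A = B ∧ 2 ≤ (A : ℕ) then 1 else 0

/-- Components `η^{AB}` of the inverse metric in a null frame. -/
noncomputable def ηup (N : ℕ) : Matrix (Fin N) (Fin N) ℝ := (ηnf N)⁻¹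

/-- The boost weight of a null-frame index: `+1` for the index `0` (the `ℓ` slot),
`−1` for the index `1` (the `n` slot), `0` for spatial indices. -/
def bw {N : ℕ} (A : Fin N) : ℤ :=
  if (A : ℕ) = 0 then 1 else if (A : ℕ) = 1 then -1 else 0

/-- A curvature-like tensor: a 4-linear form (given here by its null-frame components)
with `R_{abcd} = −R_{bacd} = R_{cdab}`. -/
def CurvLike {N : ℕ} (R : Fin N → Fin N → Fin N → Fin N → ℝ) : Prop :=
  (∀ a b c d, R a b c d = -R b a c d) ∧ (∀ a b c d, R a b c d = R c d a b)

/-- The bivector square of a curvature-like tensor: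
`R⁽²⁾_{abcd} = (1/2) R_{abef} η^{eg} η^{fh} R_{ghcd}`. -/
noncomputable def bivSq (N : ℕ) (R : Fin N → Fin N → Fin N → Fin N → ℝ) :
    Fin N → Fin N → Fin N → Fin N → ℝ :=
  fun a b c d =>
    (1 / 2 : ℝ) * ∑ e, ∑ f, ∑ g, ∑ h,
      R a b e f * ηup N e g * ηup N f h * R g h c d

/-- The Ricci contraction `Ric_{ab} = η^{cd} R_{acbd}` of a curvature-like tensor. -/
noncomputable def ricci (N : ℕ) (R : Fin N → Fin N → Fin N → Fin N → ℝ) :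
    Fin N → Fin N → ℝ :=
  fun a b => ∑ c, ∑ d, ηup N c d * R a c b d

open Finset

theorem mul_eq_mul_of_sum_mul_eq {ι κ : Type*} [Fintype κ] (w : ι → κ → ℝ) (v : ι → ℝ) (c : ℝ)
    (h : ∀ i j, ∑ k, w i k * w j k = c * (v i * v j)) (i j : ι) (k : κ) :
    v i * w j k = v j * w i k := by
  have hsq : ∑ k, (v i * w j k - v j * w i k) * (v i * w j k - v j * w i k) = 0 := calc
    _ = v i * v i * ∑ k, w j k * w j k - 2 * (v i * v j) * ∑ k, w i k * w j k
          + v j * v j * ∑ k, w i k * w i k := by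
      simp only [mul_sum, ← sum_sub_distrib, ← sum_add_distrib]
      exact sum_congr rfl fun _ _ => by ring
    _ = 0 := by rw [h, h, h]; ring
  exact sub_eq_zero.mp ((sum_mul_self_eq_zero_iff _ _).mp hsq k (mem_univ k))

theorem sum_sum_mul_mul_eq_zero_of_antisymm {ι : Type*} [Fintype ι] (v : ι → ℝ) (A : ι → ι → ℝ)
    (hA : ∀ b c, A b c = -A c b) : ∑ b, ∑ c, v b * v c * A b c = 0 := by
  have h : ∑ b, ∑ c, v b * v c * A b c = -∑ b, ∑ c, v b * v c * A b c := by
    conv_lhs => rw [sum_comm]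
    simp only [← sum_neg_distrib]
    exact sum_congr rfl fun b _ => sum_congr rfl fun c _ => by rw [hA]; ring
  linarith

theorem eq_zero_of_trace_of_gram {ι : Type*} [Fintype ι] (V : ι → ℝ) (W : ι → ι → ι → ℝ)
    (hW : ∀ i e f, W i e f = -W i f e) (htrace : ∀ i, V i + ∑ c, W c i c = 0)
    (hgram : ∀ i j, ∑ e, ∑ f, W i e f * W j e f = 2 * (V i * V j)) :
    V = 0 ∧ W = 0 := by
  have hrel : ∀ i j e f, V i * W j e f = V j * W i e f := fun i j e f =>
    mul_eq_mul_of_sum_mul_eq (fun i (p : ι × ι) => W i p.1 p.2) V 2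
      (fun i j => by rw [Fintype.sum_prod_type, hgram]) i j (e, f)
  have hcontr : ∀ a b, ∑ c, V c * W a b c = -(V a * V b) := fun a b => calc
    ∑ c, V c * W a b c = V a * ∑ c, W c b c := by rw [mul_sum]; simp only [hrel _ a]
    _ = -(V a * V b) := by rw [eq_neg_of_add_eq_zero_right (htrace b)]; ring
  have hnorm : ∀ a, V a * ∑ b, V b * V b = 0 := fun a => calc
    V a * ∑ b, V b * V b = -∑ b, V b * ∑ c, V c * W a b c := by
      simp only [hcontr, mul_sum, ← sum_neg_distrib]
      exact sum_congr rfl fun _ _ => by ring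
    _ = -∑ b, ∑ c, V b * V c * W a b c := by simp only [mul_sum, mul_assoc]
    _ = 0 := by rw [sum_sum_mul_mul_eq_zero_of_antisymm V (W a) (hW a), neg_zero]
  have hV : V = 0 := by
    have hsum : (∑ b, V b * V b) * (∑ b, V b * V b) = 0 := by
      rw [sum_mul]; exact sum_eq_zero fun a _ => by rw [mul_assoc, hnorm, mul_zero]
    funext a
    exact (sum_mul_self_eq_zero_iff _ _).mp (mul_self_eq_zero.mp hsum) a (mem_univ a)
  refine ⟨hV, funext fun i => funext fun e => funext fun f => ?_⟩
  have hi : ∑ p : ι × ι, W i p.1 p.2 * W i p.1 p.2 = 0 := by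
    rw [Fintype.sum_prod_type, hgram, hV]; simp
  exact (sum_mul_self_eq_zero_iff _ _).mp hi (e, f) (mem_univ _)

section NullFrame

variable {n : ℕ}

theorem ηnf_eq_permMatrix :
    ηnf (n + 2) = (Equiv.swap 0 1 : Equiv.Perm (Fin (n + 2))).permMatrix ℝ := by
  ext A B
  simp only [ηnf, of_apply, PEquiv.toMatrix_apply, Equiv.toPEquiv_apply, Option.mem_def,
    Option.some.injEq, Equiv.swap_apply_def, Fin.ext_iff, Fin.val_zero, Fin.val_one]
  split_ifs <;> (try simp only [Fin.val_zero, Fin.val_one] at *) <;> omega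

theorem ηup_eq_ηnf : ηup (n + 2) = ηnf (n + 2) := by
  rw [ηup, ηnf_eq_permMatrix]
  exact inv_eq_left_inv (by rw [← permMatrix_mul, Equiv.swap_mul_self, permMatrix_one])

theorem sum_ηup_mul (c : Fin (n + 2)) (g : Fin (n + 2) → ℝ) :
    ∑ d, ηup (n + 2) c d * g d = g (Equiv.swap 0 1 c) := by
  rw [ηup_eq_ηnf, ηnf_eq_permMatrix]
  simp

theorem sum_sum_ηup_mul (f : Fin (n + 2) → Fin (n + 2) → ℝ) :
    ∑ c, ∑ d, ηup (n + 2) c d * f c d = f 0 1 + f 1 0 + ∑ j : Fin n, f j.succ.succ j.succ.succ := by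
  have hfix (j : Fin n) : Equiv.swap 0 1 j.succ.succ = j.succ.succ :=
    Equiv.swap_apply_of_ne_of_ne (Fin.succ_ne_zero _) (Fin.succ_succ_ne_one _)
  simp only [sum_ηup_mul]
  rw [Fin.sum_univ_succ, Fin.sum_univ_succ]
  simp [hfix, add_assoc]

@[simp] theorem bw_zero : bw (0 : Fin (n + 2)) = 1 := rfl
@[simp] theorem bw_one : bw (1 : Fin (n + 2)) = -1 := rfl
@[simp] theorem bw_succ_succ (j : Fin n) : bw j.succ.succ = 0 := by simp [bw]

end NullFrame

def NegativeBoostOrder {N : ℕ} (R : Fin N → Fin N → Fin N → Fin N → ℝ) : Prop :=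
  ∀ a b c d : Fin N, 0 ≤ bw a + bw b + bw c + bw d → R a b c d = 0

section Curvature

variable {N : ℕ} {R : Fin N → Fin N → Fin N → Fin N → ℝ}

theorem NegativeBoostOrder.eq_zero (hR : NegativeBoostOrder R) {a b c d : Fin N}
    (h : 0 ≤ bw a + bw b + bw c + bw d) : R a b c d = 0 :=
  hR a b c d h

theorem CurvLike.antisymm_right (hR : CurvLike R) (a b c d : Fin N) :
    R a b c d = -R a b d c := by
  rw [hR.2, hR.1, hR.2]

theorem CurvLike.self_left (hR : CurvLike R) (a c d : Fin N) : R a a c d = 0 := by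
  linarith [hR.1 a a c d]

theorem bivSq_eq_sum_sum_ηup (a b c d : Fin N) :
    bivSq N R a b c d =
      1 / 2 * ∑ e, ∑ g, ηup N e g * ∑ f, ∑ h, ηup N f h * (R a b e f * R g h c d) := by
  unfold bivSq
  congr 1
  refine sum_congr rfl fun e _ => ?_
  rw [sum_comm]
  refine sum_congr rfl fun g _ => ?_
  simp only [mul_sum]
  exact sum_congr rfl fun f _ => sum_congr rfl fun h _ => by ring

end Curvature

section NullFrameCurvature

variable {n : ℕ} {R : Fin (n + 2) → Fin (n + 2) → Fin (n + 2) → Fin (n + 2) → ℝ}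

theorem CurvLike.ricci_one_succ_succ (hR : CurvLike R) (i : Fin n) :
    ricci (n + 2) R 1 i.succ.succ =
      R 0 1 1 i.succ.succ + ∑ k : Fin n, R 1 k.succ.succ i.succ.succ k.succ.succ := by
  rw [ricci, sum_sum_ηup_mul, hR.self_left, hR.1 1 0, hR.antisymm_right 0 1, neg_neg,
    add_zero]

theorem two_mul_bivSq_one_succ_succ (hR : CurvLike R) (hneg : NegativeBoostOrder R)
    (i j : Fin n) :
    2 * bivSq (n + 2) R 1 i.succ.succ 1 j.succ.succ =
      ∑ e : Fin n, ∑ f : Fin n, R 1 i.succ.succ e.succ.succ f.succ.succ *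
        R 1 j.succ.succ e.succ.succ f.succ.succ
      - 2 * (R 0 1 1 i.succ.succ * R 0 1 1 j.succ.succ) := by
  rw [bivSq_eq_sum_sum_ηup]
  simp only [sum_sum_ηup_mul]
  -- six of the nine products have a factor of boost weight `≥ 0`
  simp (disch := simp) only [hneg.eq_zero, zero_mul, mul_zero, sum_const_zero, add_zero, zero_add]
  have hpair (e f : Fin n) : R e.succ.succ f.succ.succ 1 j.succ.succ =
      R 1 j.succ.succ e.succ.succ f.succ.succ := hR.2 _ _ _ _
  simp only [hpair]
  rw [hR.antisymm_right 1 _ 1 0, hR.2 1 _ 0 1, hR.1 1 0 1]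
  ring

end NullFrameCurvature

theorem Fin.exists_succ_succ_eq {n : ℕ} {i : Fin (n + 2)} (hi : 2 ≤ (i : ℕ)) :
    ∃ j : Fin n, j.succ.succ = i :=
  ⟨⟨i - 2, by omega⟩, Fin.ext (by simp only [Fin.val_succ]; omega)⟩

/-- **Lemma 10** (`lem:zr2`): let `R` be a curvature-like tensor of negative boost order
with respect to a null frame (all components of boost weight `≥ 0` vanish, so the only
possibly nonzero components are `R_{011i}`, `R_{1ijk}`, `R_{1i1j}`).  If the bivector
square vanishes, `R⁽²⁾ = 0`, and the Ricci contraction vanishes, then also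
`R_{011i} = 0` and `R_{1ijk} = 0` for all spatial `i, j, k`; that is, `R` is of
principal type N and its only possibly nonvanishing components are `R_{1i1j}`. -/
theorem negative_boost_order_type_N (N : ℕ) (hN : 2 ≤ N)
    (R : Fin N → Fin N → Fin N → Fin N → ℝ) (hcurv : CurvLike R)
    (hneg : ∀ a b c d : Fin N, 0 ≤ bw a + bw b + bw c + bw d → R a b c d = 0)
    (hsq : ∀ a b c d, bivSq N R a b c d = 0)
    (hric : ∀ a b, ricci N R a b = 0) :
    (∀ i : Fin N, 2 ≤ (i : ℕ) →
      R ⟨0, by omega⟩ ⟨1, by omega⟩ ⟨1, by omega⟩ i = 0) ∧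
    (∀ i j k : Fin N, 2 ≤ (i : ℕ) → 2 ≤ (j : ℕ) → 2 ≤ (k : ℕ) →
      R ⟨1, by omega⟩ i j k = 0) := by
  obtain ⟨n, rfl⟩ : ∃ n, N = n + 2 := ⟨N - 2, by omega⟩
  obtain ⟨hV, hW⟩ := eq_zero_of_trace_of_gram (fun i : Fin n => R 0 1 1 i.succ.succ)
    (fun i e f => R 1 i.succ.succ e.succ.succ f.succ.succ)
    (fun _ _ _ => hcurv.antisymm_right _ _ _ _)
    (fun i => by rw [← hcurv.ricci_one_succ_succ, hric])
    (fun i j => by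
      linarith [two_mul_bivSq_one_succ_succ hcurv hneg i j, hsq 1 i.succ.succ 1 j.succ.succ])
  refine ⟨fun i hi => ?_, fun i j k hi hj hk => ?_⟩
  · obtain ⟨i, rfl⟩ := Fin.exists_succ_succ_eq hi
    exact congrFun hV i
  · obtain ⟨i, rfl⟩ := Fin.exists_succ_succ_eq hi
    obtain ⟨j, rfl⟩ := Fin.exists_succ_succ_eq hj
    obtain ⟨k, rfl⟩ := Fin.exists_succ_succ_eq hk
    exact congrFun (congrFun (congrFun hW i) j) k
end
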